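/- arXiv:0809.2070 — 2 statements merged into one kernel-verified Lean document; each statement's English description precedes it below -/
import Mathlib

section
/- Define, for continuous endpoint-preserving maps fᵢ ∈ E(kᵢ) (1 ≤ i ≤ m), the juxtaposition f₁ ⊕ ⋯ ⊕ f_m : [0,m] → [0, k₁ + ⋯ + k_m] by (f₁ ⊕ ⋯ ⊕ f_m)(s) = (k₁ + ⋯ + k_{i-1}) + fᵢ(s − (i−1)) for s ∈ [i−1, i]. Then for every g ∈ E(m) and fᵢ ∈ E(kᵢ), the composite γ(g; f₁, …, f_m) := (f₁ ⊕ ⋯ ⊕ f_m) ∘ g lies in E(k₁ + ⋯ + k_m); the resulting map γ : E(m) × E(k₁) × ⋯ × E(k_m) → E(k₁ + ⋯ + k_m) is continuous; and γ is associative and unital with unit the identity map of [0,1] in E(1). In other words, the spaces E(k) form a nonsymmetric operad in topological spaces. -/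
/-!
STATEMENT 1: The spaces `E(k)` of endpoint-preserving continuous maps `[0,1] → [0,k]`
form a nonsymmetric topological operad, with composition
`γ(g; f₁, …, f_m) = (f₁ ⊕ ⋯ ⊕ f_m) ∘ g`, where `⊕` denotes juxtaposition.
-/

open scoped unitInterval

/-- The space `E k` of endpoint-preserving continuous maps `[0,1] → [0,k]`,
as a subspace of `C([0,1], ℝ)` with the compact-open topology. -/
def TrimbleE (k : ℕ) : Type :=
  { f : C(I, ℝ) //
      (∀ t, f t ∈ Set.Icc (0 : ℝ) (k : ℝ)) ∧ f 0 = 0 ∧ f 1 = (k : ℝ) }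

instance (k : ℕ) : TopologicalSpace (TrimbleE k) :=
  inferInstanceAs (TopologicalSpace
    { f : C(I, ℝ) //
        (∀ t, f t ∈ Set.Icc (0 : ℝ) (k : ℝ)) ∧ f 0 = 0 ∧ f 1 = (k : ℝ) })

/-- Partial sums of arities: `psum k j = k₀ + ⋯ + k_{j-1}`. -/
def psum {m : ℕ} (k : Fin m → ℕ) (j : ℕ) : ℕ :=
  ∑ i : Fin m, if i.val < j then k i else 0

theorem psum_le {m : ℕ} (k : Fin m → ℕ) (j : ℕ) : psum k j ≤ ∑ i, k i :=
  Finset.sum_le_sum fun i _ => by split <;> omega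

theorem psum_succ {m : ℕ} (k : Fin m → ℕ) (j : Fin m) :
    psum k (j.val + 1) = psum k j.val + k j := by
  unfold psum
  have key : ∀ i : Fin m, (if i.val < j.val + 1 then k i else 0) =
      (if i.val < j.val then k i else 0) + (if i = j then k i else 0) := by
    intro i
    by_cases h1 : i = j
    · subst h1; simp
    · have hv : i.val ≠ j.val := fun hc => h1 (Fin.ext hc)
      by_cases h2 : i.val < j.val
      · rw [if_pos (by omega), if_pos h2, if_neg h1]; omega
      · rw [if_neg (by omega), if_neg h2, if_neg h1]
  rw [Finset.sum_congr rfl fun i _ => key i, Finset.sum_add_distrib,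
    Finset.sum_ite_eq' Finset.univ j k]
  simp

theorem psum_add_le {m : ℕ} (k : Fin m → ℕ) (j : Fin m) (r : ℕ) (hr : r ≤ k j) :
    psum k j.val + r ≤ ∑ i, k i := by
  have h1 := psum_succ k j
  have h2 := psum_le k (j.val + 1)
  omega

/-- The index of the `r`-th element of the `j`-th block in the concatenation of
blocks of sizes `k 0, …, k (m-1)` (blocks are taken consecutively, in order). -/
def blockIdx {m : ℕ} (k : Fin m → ℕ) (j : Fin m) (r : Fin (k j)) : Fin (∑ i, k i) :=
  ⟨psum k j.val + r.val, by
    have := psum_add_le k j (r.val + 1) r.isLt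
    omega⟩

/-- The juxtaposition `f₁ ⊕ ⋯ ⊕ f_m : [0,m] → [0, k₁ + ⋯ + k_m]`, defined (as a total
function on `ℝ`) by `(f₁ ⊕ ⋯ ⊕ f_m)(s) = (k₁ + ⋯ + k_{i-1}) + f_i(s − (i−1))` for
`s ∈ [i−1, i]`. -/
noncomputable def juxtFun {m : ℕ} (k : Fin m → ℕ) (f : ∀ i, TrimbleE (k i)) :
    ℝ → ℝ := fun s =>
  if h : m = 0 then 0
  else
    let i : Fin m := ⟨min ⌊s⌋₊ (m - 1), lt_of_le_of_lt (min_le_right _ _) (by omega)⟩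
    (psum k i.val : ℝ) + (f i).1 (Set.projIcc 0 1 zero_le_one (s - i.val))

/-- The identity map of `[0,1]`, as an element of `E(1)`. -/
def idE : TrimbleE 1 :=
  ⟨⟨fun t => (t : ℝ), continuous_subtype_val⟩, by
    refine ⟨fun t => by simpa using t.2, rfl, by simp⟩⟩



namespace TrimbleAux

noncomputable abbrev prj (x : ℝ) : I := Set.projIcc 0 1 zero_le_one x

lemma prj_nonpos {x : ℝ} (hx : x ≤ 0) : prj x = 0 := by
  rw [prj, Set.projIcc_of_le_left _ hx]; rfl

lemma prj_one_le {x : ℝ} (hx : 1 ≤ x) : prj x = 1 := by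
  rw [prj, Set.projIcc_of_right_le _ hx]; rfl

lemma psum_mono {m : ℕ} (k : Fin m → ℕ) {a b : ℕ} (hab : a ≤ b) :
    psum k a ≤ psum k b := by
  apply Finset.sum_le_sum
  intro i _
  by_cases h : i.val < a
  · rw [if_pos h, if_pos (lt_of_lt_of_le h hab)]
  · rw [if_neg h]; exact Nat.zero_le _

lemma psum_all {m : ℕ} (k : Fin m → ℕ) : psum k m = ∑ i, k i := by
  unfold psum
  exact Finset.sum_congr rfl fun i _ => if_pos i.isLt

lemma psum_cast {m : ℕ} (k : Fin m → ℕ) (j : ℕ) :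
    ((psum k j : ℕ) : ℝ) = ∑ i : Fin m, if i.val < j then (k i : ℝ) else 0 := by
  unfold psum
  push_cast
  exact Finset.sum_congr rfl fun i _ => by split <;> simp

/-- Key formula: the juxtaposition equals a globally-defined sum of clamped terms. -/
lemma juxtFun_eq_sum {m : ℕ} (k : Fin m → ℕ) (f : ∀ i, TrimbleE (k i)) (s : ℝ) :
    juxtFun k f s = ∑ i : Fin m, (f i).1 (prj (s - i.val)) := by
  rcases Nat.eq_zero_or_pos m with hm | hm
  · subst hm; simp [juxtFun]
  · rw [juxtFun, dif_neg (by omega)]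
    set jv := min ⌊s⌋₊ (m - 1) with hjv
    set j : Fin m := ⟨jv, lt_of_le_of_lt (min_le_right _ _) (by omega)⟩ with hj
    have hsub : ∀ i : Fin m, i.val < jv → 1 ≤ s - i.val := by
      intro i hi
      have h1 : 1 ≤ jv := by omega
      have hfl : 1 ≤ ⌊s⌋₊ := le_trans h1 (min_le_left _ _)
      have hs0 : (0:ℝ) ≤ s := by
        by_contra hc
        push_neg at hc
        rw [Nat.floor_eq_zero.2 (by linarith)] at hfl; omega
      have h2 : (jv : ℝ) ≤ s := le_trans (by exact_mod_cast Nat.cast_le.2 (min_le_left _ _)) (Nat.floor_le hs0)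
      have h3 : (i.val : ℝ) ≤ (jv : ℝ) - 1 := by
        have : (i.val : ℝ) + 1 ≤ (jv : ℝ) := by exact_mod_cast Nat.succ_le_of_lt hi
        linarith
      linarith
    have hsup : ∀ i : Fin m, jv < i.val → s - i.val ≤ 0 := by
      intro i hi
      have him := i.isLt
      rcases le_or_gt ⌊s⌋₊ (m-1) with hc | hc
      · have hje : jv = ⌊s⌋₊ := min_eq_left hc
        have h1 : s < (jv : ℝ) + 1 := by
          rw [hje]; push_cast; exact Nat.lt_floor_add_one s
        have h2 : (jv : ℝ) + 1 ≤ (i.val : ℝ) := by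
          exact_mod_cast Nat.succ_le_of_lt hi
        linarith
      · have hje : jv = m - 1 := min_eq_right (le_of_lt hc)
        exact absurd hi (by omega)
    have key : ∀ i : Fin m, ((f i).1 (prj (s - i.val)) : ℝ) =
        (if i.val < jv then (k i : ℝ) else 0) +
          (if i = j then ((f j).1 (prj (s - jv)) : ℝ) else 0) := by
      intro i
      rcases lt_trichotomy i.val jv with hlt | heq | hgt
      · rw [if_pos hlt, if_neg (by intro hc; subst hc; exact lt_irrefl jv hlt)]
        rw [prj_one_le (hsub i hlt), (f i).2.2.2]
        ring
      · have hij : i = j := Fin.ext heq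
        subst hij
        rw [if_neg (fun hc => lt_irrefl jv (heq ▸ hc)), if_pos rfl, heq]
        ring
      · rw [if_neg (by omega), if_neg (by intro hc; subst hc; exact lt_irrefl jv hgt)]
        rw [prj_nonpos (hsup i hgt), (f i).2.2.1]
        ring
    rw [Finset.sum_congr rfl fun i _ => key i, Finset.sum_add_distrib,
      Finset.sum_ite_eq' Finset.univ j (fun _ => ((f j).1 (prj (s - jv)) : ℝ))]
    rw [if_pos (Finset.mem_univ _), ← psum_cast]

lemma juxtFun_mem {m : ℕ} (k : Fin m → ℕ) (f : ∀ i, TrimbleE (k i)) (s : ℝ) :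
    juxtFun k f s ∈ Set.Icc (0:ℝ) ((∑ i, k i : ℕ) : ℝ) := by
  rw [juxtFun_eq_sum]
  constructor
  · exact Finset.sum_nonneg fun i _ => ((f i).2.1 _).1
  · push_cast
    exact Finset.sum_le_sum fun i _ => ((f i).2.1 _).2

lemma juxtFun_of_nonpos {m : ℕ} (k : Fin m → ℕ) (f : ∀ i, TrimbleE (k i)) {s : ℝ}
    (hs : s ≤ 0) : juxtFun k f s = 0 := by
  rw [juxtFun_eq_sum]
  apply Finset.sum_eq_zero
  intro i _
  rw [prj_nonpos (by have : (0:ℝ) ≤ (i.val:ℝ) := Nat.cast_nonneg _; linarith)]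
  exact (f i).2.2.1

lemma juxtFun_of_ge {m : ℕ} (k : Fin m → ℕ) (f : ∀ i, TrimbleE (k i)) {s : ℝ}
    (hs : (m : ℝ) ≤ s) : juxtFun k f s = ((∑ i, k i : ℕ) : ℝ) := by
  rw [juxtFun_eq_sum]
  push_cast
  apply Finset.sum_congr rfl
  intro i _
  have hi : (i.val : ℝ) + 1 ≤ (m : ℝ) := by exact_mod_cast Nat.succ_le_of_lt i.isLt
  rw [prj_one_le (by linarith), (f i).2.2.2]

lemma juxtFun_continuous {m : ℕ} (k : Fin m → ℕ) (f : ∀ i, TrimbleE (k i)) :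
    Continuous (juxtFun k f) := by
  have : juxtFun k f = fun s => ∑ i : Fin m, ((f i).1 (prj (s - i.val)) : ℝ) :=
    funext fun s => juxtFun_eq_sum k f s
  rw [this]
  exact continuous_finset_sum _ fun i _ =>
    (f i).1.continuous.comp (continuous_projIcc.comp (continuous_id.sub continuous_const))

noncomputable def gammaMap {m : ℕ} (k : Fin m → ℕ) (g : TrimbleE m)
    (f : ∀ i, TrimbleE (k i)) : TrimbleE (∑ i, k i) :=
  ⟨⟨fun t => juxtFun k f (g.1 t), (juxtFun_continuous k f).comp g.1.continuous⟩,
    fun t => juxtFun_mem k f (g.1 t),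
    by
      show juxtFun k f (g.1 0) = 0
      rw [g.2.2.1]; exact juxtFun_of_nonpos k f le_rfl,
    by
      show juxtFun k f (g.1 1) = _
      rw [g.2.2.2]; exact juxtFun_of_ge k f le_rfl⟩

end TrimbleAux

namespace TrimbleAux

lemma uncurry_cont {m : ℕ} (k : Fin m → ℕ) :
    Continuous fun p : (∀ i, TrimbleE (k i)) × ℝ => juxtFun k p.1 p.2 := by
  have : (fun p : (∀ i, TrimbleE (k i)) × ℝ => juxtFun k p.1 p.2) =
      fun p => ∑ i : Fin m, ((p.1 i).1 (prj (p.2 - i.val)) : ℝ) :=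
    funext fun p => juxtFun_eq_sum k p.1 p.2
  rw [this]
  apply continuous_finset_sum
  intro i _
  have h1 : Continuous fun p : (∀ i, TrimbleE (k i)) × ℝ => ((p.1 i).1 : C(I, ℝ)) :=
    continuous_subtype_val.comp ((continuous_apply i).comp continuous_fst)
  have h2 : Continuous fun p : (∀ i, TrimbleE (k i)) × ℝ => prj (p.2 - i.val) :=
    continuous_projIcc.comp ((continuous_snd).sub continuous_const)
  exact continuous_eval.comp (h1.prodMk h2)

noncomputable def Jcm {m : ℕ} (k : Fin m → ℕ) (f : ∀ i, TrimbleE (k i)) : C(ℝ, ℝ) :=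
  ⟨juxtFun k f, juxtFun_continuous k f⟩

lemma Jcm_continuous {m : ℕ} (k : Fin m → ℕ) : Continuous (Jcm k) :=
  ContinuousMap.continuous_of_continuous_uncurry _ (uncurry_cont k)

lemma gammaMap_continuous {m : ℕ} (k : Fin m → ℕ) :
    Continuous fun p : TrimbleE m × (∀ i, TrimbleE (k i)) => gammaMap k p.1 p.2 := by
  apply Continuous.subtype_mk
  show Continuous fun p : TrimbleE m × (∀ i, TrimbleE (k i)) => (gammaMap k p.1 p.2).1
  have : (fun p : TrimbleE m × (∀ i, TrimbleE (k i)) => (gammaMap k p.1 p.2).1) =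
      fun p => (Jcm k p.2).comp p.1.1 := by
    funext p
    ext t
    rfl
  rw [this]
  have hc : Continuous fun p : TrimbleE m × (∀ i, TrimbleE (k i)) =>
      ((p.1.1, Jcm k p.2) : C(I, ℝ) × C(ℝ, ℝ)) :=
    (continuous_subtype_val.comp continuous_fst).prodMk ((Jcm_continuous k).comp continuous_snd)
  exact ContinuousMap.continuous_comp'.comp hc

end TrimbleAux

namespace TrimbleAux

lemma blockIdx_bijective {m : ℕ} (k : Fin m → ℕ) :
    Function.Bijective (fun x : Σ i : Fin m, Fin (k i) => blockIdx k x.1 x.2) := by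
  rw [Fintype.bijective_iff_injective_and_card]
  constructor
  · rintro ⟨i, r⟩ ⟨i', r'⟩ hx
    have hv : psum k i.val + r.val = psum k i'.val + r'.val := congrArg Fin.val hx
    have key : ∀ (a b : Fin m), a.val < b.val → ∀ (ra : Fin (k a)) (rb : Fin (k b)),
        psum k a.val + ra.val ≠ psum k b.val + rb.val := by
      intro a b hab ra rb hne
      have h1 : psum k (a.val + 1) ≤ psum k b.val := psum_mono k hab
      have h2 := psum_succ k a
      have h3 := ra.isLt
      omega
    rcases lt_trichotomy i.val i'.val with hlt | heq | hgt
    · exact absurd hv (key i i' hlt r r')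
    · have hii : i = i' := Fin.ext heq
      subst hii
      have : r = r' := Fin.ext (by omega)
      rw [this]
    · exact absurd hv.symm (key i' i hgt r' r)
  · simp [Fintype.card_sigma]

/-- The core pointwise associativity identity. -/
lemma assoc_core {m : ℕ} (k : Fin m → ℕ) (l : ∀ i, Fin (k i) → ℕ)
    (f : ∀ i, TrimbleE (k i)) (h : ∀ i j, TrimbleE (l i j))
    (fl : Fin (∑ i, k i) → ℕ) (fh : ∀ p, TrimbleE (fl p))
    (hfl : ∀ i r, fl (blockIdx k i r) = l i r)
    (hfh : ∀ i r, (fh (blockIdx k i r)).1 = (h i r).1)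
    (s : ℝ) :
    juxtFun fl fh (juxtFun k f s) =
      ∑ i : Fin m, juxtFun (l i) (h i) ((f i).1 (prj (s - i.val))) := by
  rcases Nat.eq_zero_or_pos m with hm | hm
  · subst hm
    rw [juxtFun_eq_sum]
    rw [Finset.sum_eq_zero (fun p _ => absurd p.isLt (by simp))]
    exact (Finset.sum_of_isEmpty _).symm
  -- setup
  · set jv := min ⌊s⌋₊ (m - 1) with hjv
    set j : Fin m := ⟨jv, lt_of_le_of_lt (min_le_right _ _) (by omega)⟩ with hj
    set v : ℝ := ((f j).1 (prj (s - jv)) : ℝ) with hv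
    have hv0 : 0 ≤ v := ((f j).2.1 _).1
    have hvk : v ≤ k j := ((f j).2.1 _).2
    have hu : juxtFun k f s = (psum k jv : ℝ) + v := by
      rw [juxtFun, dif_neg (by omega)]
    -- certain structural facts about s proved as in juxtFun_eq_sum
    have hsub : ∀ i : Fin m, i.val < jv → 1 ≤ s - i.val := by
      intro i hi
      have h1 : 1 ≤ jv := by omega
      have hfl' : 1 ≤ ⌊s⌋₊ := le_trans h1 (min_le_left _ _)
      have hs0 : (0:ℝ) ≤ s := by
        by_contra hc
        push_neg at hc
        rw [Nat.floor_eq_zero.2 (by linarith)] at hfl'; omega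
      have h2 : (jv : ℝ) ≤ s :=
        le_trans (by exact_mod_cast Nat.cast_le.2 (min_le_left _ _)) (Nat.floor_le hs0)
      have h3 : (i.val : ℝ) ≤ (jv : ℝ) - 1 := by
        have : (i.val : ℝ) + 1 ≤ (jv : ℝ) := by exact_mod_cast Nat.succ_le_of_lt hi
        linarith
      linarith
    have hsup : ∀ i : Fin m, jv < i.val → s - i.val ≤ 0 := by
      intro i hi
      have him := i.isLt
      rcases le_or_gt ⌊s⌋₊ (m-1) with hc | hc
      · have hje : jv = ⌊s⌋₊ := min_eq_left hc
        have h1 : s < (jv : ℝ) + 1 := by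
          rw [hje]; exact Nat.lt_floor_add_one s
        have h2 : (jv : ℝ) + 1 ≤ (i.val : ℝ) := by
          exact_mod_cast Nat.succ_le_of_lt hi
        linarith
      · have hje : jv = m - 1 := min_eq_right (le_of_lt hc)
        exact absurd hi (by omega)
    -- expand the LHS as a double sum over blocks
    rw [hu, juxtFun_eq_sum]
    rw [← Fintype.sum_bijective _ (blockIdx_bijective k)
      (fun x : Σ i : Fin m, Fin (k i) =>
        ((fh (blockIdx k x.1 x.2)).1 (prj ((psum k jv : ℝ) + v - ((blockIdx k x.1 x.2).val : ℝ))) : ℝ))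
      _ (fun x => rfl)]
    rw [← Finset.univ_sigma_univ, Finset.sum_sigma]
    apply Finset.sum_congr rfl
    intro i _
    -- rewrite fh to h
    have hterm : ∀ r : Fin (k i),
        ((fh (blockIdx k i r)).1 (prj ((psum k jv : ℝ) + v - ((blockIdx k i r).val : ℝ))) : ℝ) =
        ((h i r).1 (prj ((psum k jv : ℝ) + v - (psum k i.val : ℝ) - (r.val : ℝ))) : ℝ) := by
      intro r
      rw [hfh i r]
      congr 1
      congr 1
      show (psum k jv : ℝ) + v - ((psum k i.val + r.val : ℕ) : ℝ) = _
      push_cast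
      ring
    rw [Finset.sum_congr rfl fun r _ => hterm r]
    rcases lt_trichotomy i.val jv with hlt | heq | hgt
    · -- i < j: both sides are ∑ l i r
      have hfi : ((f i).1 (prj (s - i.val)) : ℝ) = (k i : ℝ) := by
        rw [prj_one_le (hsub i hlt)]; exact (f i).2.2.2
      rw [hfi, juxtFun_of_ge (l i) (h i) le_rfl]
      push_cast
      apply Finset.sum_congr rfl
      intro r _
      have h1 : psum k (i.val + 1) ≤ psum k jv := psum_mono k hlt
      have h2 := psum_succ k i
      have h3 := r.isLt
      have hnat : psum k i.val + r.val + 1 ≤ psum k jv := by omega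
      have harg : 1 ≤ (psum k jv : ℝ) + v - (psum k i.val : ℝ) - (r.val : ℝ) := by
        have hcast := (Nat.cast_le (α := ℝ)).2 hnat
        push_cast at hcast
        linarith
      rw [prj_one_le harg]
      exact (h i r).2.2.2
    · -- i = j
      have hij : i = j := Fin.ext heq
      subst hij
      rw [juxtFun_eq_sum]
      apply Finset.sum_congr rfl
      intro r _
      congr 2
      rw [← hv, heq]
      ring
    · -- i > j : both sides vanish
      have hfi : ((f i).1 (prj (s - i.val)) : ℝ) = 0 := by
        rw [prj_nonpos (hsup i hgt)]; exact (f i).2.2.1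
      rw [hfi, juxtFun_of_nonpos (l i) (h i) le_rfl]
      apply Finset.sum_eq_zero
      intro r _
      have h1 : psum k (jv + 1) ≤ psum k i.val := psum_mono k hgt
      have h2 : psum k (jv + 1) = psum k jv + k j := psum_succ k j
      have hnat : psum k jv + k j ≤ psum k i.val := by omega
      have harg : (psum k jv : ℝ) + v - (psum k i.val : ℝ) - (r.val : ℝ) ≤ 0 := by
        have hcast := (Nat.cast_le (α := ℝ)).2 hnat
        push_cast at hcast
        have : (0:ℝ) ≤ (r.val : ℝ) := Nat.cast_nonneg _
        linarith
      rw [prj_nonpos harg]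
      exact (h i r).2.2.1

lemma sum_prj {m : ℕ} {x : ℝ} (h0 : 0 ≤ x) (hm : x ≤ m) :
    ∑ i : Fin m, ((prj (x - i.val)) : ℝ) = x := by
  induction m with
  | zero =>
    simp only [Nat.cast_zero] at hm
    simp [le_antisymm hm h0]
  | succ n ih =>
    rw [Fin.sum_univ_castSucc]
    rcases le_or_gt x n with hc | hc
    · have hlast : ((prj (x - (n : ℝ))) : ℝ) = 0 := by
        rw [prj_nonpos (by linarith)]; rfl
      have : ∀ i : Fin n, ((prj (x - ((Fin.castSucc i).val : ℕ))) : ℝ) = ((prj (x - i.val)) : ℝ) := by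
        intro i; rfl
      rw [Finset.sum_congr rfl fun i _ => this i, ih hc]
      simp [hlast]
    · have hterm : ∀ i : Fin n, ((prj (x - ((Fin.castSucc i).val : ℕ))) : ℝ) = 1 := by
        intro i
        have hi : (i.val : ℝ) + 1 ≤ (n : ℝ) := by exact_mod_cast Nat.succ_le_of_lt i.isLt
        rw [prj_one_le (by show (1:ℝ) ≤ x - i.val; linarith)]; rfl
      rw [Finset.sum_congr rfl fun i _ => hterm i, Finset.sum_const, Finset.card_univ]
      simp only [Fintype.card_fin, nsmul_eq_mul, mul_one, prj, Set.coe_projIcc, Fin.val_last]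
      have h1 : (1:ℝ) ⊓ (x - n) = x - n := inf_eq_right.2 (by push_cast at hm; linarith)
      rw [h1]
      have h2 : (0:ℝ) ⊔ (x - n) = x - n := sup_eq_right.2 (by linarith)
      rw [h2]
      push_cast
      ring
  
end TrimbleAux


open TrimbleAux in
/-- The spaces `E(k)` form a nonsymmetric operad in topological spaces:
there is a composition `γ(g; f₁, …, f_m) = (f₁ ⊕ ⋯ ⊕ f_m) ∘ g` landing in
`E(k₁ + ⋯ + k_m)`; it is continuous, associative and unital with unit the identity
of `[0,1]`. -/
theorem stmt_1 :
    ∃ γ : ∀ (m : ℕ) (k : Fin m → ℕ),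
        TrimbleE m → (∀ i, TrimbleE (k i)) → TrimbleE (∑ i, k i),
      -- γ is given by the formula `γ(g; f₁,…,f_m) = (f₁ ⊕ ⋯ ⊕ f_m) ∘ g`
      -- (in particular this composite, which a priori is just a function,
      --  lies in `E(k₁ + ⋯ + k_m)`):
      (∀ (m : ℕ) (k : Fin m → ℕ) (g : TrimbleE m) (f : ∀ i, TrimbleE (k i)) (t : I),
          (γ m k g f).1 t = juxtFun k f (g.1 t)) ∧
      -- γ is continuous:
      (∀ (m : ℕ) (k : Fin m → ℕ),
          Continuous fun p : TrimbleE m × (∀ i, TrimbleE (k i)) => γ m k p.1 p.2) ∧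
      -- γ is associative (the doubly-indexed family `h` is flattened into the
      -- family `fh`, block by block, via the index bijection `blockIdx`):
      (∀ (m : ℕ) (k : Fin m → ℕ) (l : ∀ i, Fin (k i) → ℕ) (g : TrimbleE m)
          (f : ∀ i, TrimbleE (k i)) (h : ∀ i j, TrimbleE (l i j))
          (fl : Fin (∑ i, k i) → ℕ) (fh : ∀ p, TrimbleE (fl p)),
          (∀ (i : Fin m) (r : Fin (k i)), fl (blockIdx k i r) = l i r) →
          (∀ (i : Fin m) (r : Fin (k i)), (fh (blockIdx k i r)).1 = (h i r).1) →
          (γ (∑ i, k i) fl (γ m k g f) fh).1 =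
            (γ m (fun i => ∑ j, l i j) g (fun i => γ (k i) (l i) (f i) (h i))).1) ∧
      -- left unit law:
      (∀ (k : Fin 1 → ℕ) (f : ∀ i, TrimbleE (k i)),
          (γ 1 k idE f).1 = (f 0).1) ∧
      -- right unit law:
      (∀ (m : ℕ) (g : TrimbleE m),
          (γ m (fun _ => 1) g (fun _ => idE)).1 = g.1) := by
  classical
  refine ⟨fun m k g f => gammaMap k g f, fun m k g f t => rfl,
    fun m k => gammaMap_continuous k, ?_, ?_, ?_⟩
  · intro m k l g f h fl fh hfl hfh
    ext t
    show juxtFun fl fh (juxtFun k f (g.1 t)) =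
      juxtFun (fun i => ∑ j, l i j) (fun i => gammaMap (l i) (f i) (h i)) (g.1 t)
    rw [assoc_core k l f h fl fh hfl hfh, juxtFun_eq_sum]
    exact Finset.sum_congr rfl fun i _ => rfl
  · intro k f
    ext t
    show juxtFun k f (idE.1 t) = (f 0).1 t
    rw [show idE.1 t = (t : ℝ) from rfl, juxtFun_eq_sum, Fin.sum_univ_one]
    show ((f 0).1 (prj ((t : ℝ) - ((0 : Fin 1).val : ℕ))) : ℝ) = _
    norm_num [show prj (t : ℝ) = t from Set.projIcc_val zero_le_one t]
  · intro m g
    ext t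
    show juxtFun (fun _ => 1) (fun _ => idE) (g.1 t) = g.1 t
    rw [juxtFun_eq_sum]
    exact sum_prj (g.2.1 t).1 (g.2.1 t).2
end

section
/- For every n ≥ 0, the category of n-globular sets (functors 𝔾_nᵒᵖ → Set) is equivalent to the iterated graph category n-Gph, defined inductively by 0-Gph = Set and (k+1)-Gph = (k-Gph)-Gph. -/
/-!
STATEMENT 14: For every `n ≥ 0`, the category of `n`-globular sets (presheaves on
the `n`-truncated globe category `𝔾_n`, which is generated by cosource/cotarget
maps `σ_m, τ_m : m → m+1` subject to the coglobularity relations) is equivalent to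
the iterated graph category `n-Gph`, where `0-Gph = Set` and
`(k+1)-Gph = (k-Gph)-Gph`.
-/

open CategoryTheory Limits

universe v u

/-- A `V`-graph: a set of objects together with a hom-object of `V` for every
ordered pair of objects. -/
structure VGph (V : Type u) [Category.{v} V] where
  Obj : Type
  hom : Obj → Obj → V

variable {V : Type u} [Category.{v} V]

structure VGphHom (A B : VGph V) where
  toFun : A.Obj → B.Obj
  app : ∀ a a', A.hom a a' ⟶ B.hom (toFun a) (toFun a')

theorem VGphHom.ext' {A B : VGph V} {F G : VGphHom A B}
    (h : F.toFun = G.toFun) (h2 : HEq F.app G.app) : F = G := by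
  cases F; cases G; cases h; cases h2; rfl

instance : Category (VGph V) where
  Hom := VGphHom
  id A := ⟨fun a => a, fun a a' => 𝟙 _⟩
  comp F G := ⟨fun a => G.toFun (F.toFun a), fun a a' => F.app a a' ≫ G.app _ _⟩
  id_comp F := VGphHom.ext' rfl (heq_of_eq (by funext a a'; simp))
  comp_id F := VGphHom.ext' rfl (heq_of_eq (by funext a a'; simp))
  assoc F G H := VGphHom.ext' rfl (heq_of_eq (by funext a a'; simp))

/-- The iterated graph categories: `0-Gph = Set`, `(k+1)-Gph = (k-Gph)-Gph`. -/
def nGph : ℕ → Cat.{0, 1}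
  | 0 => Cat.of (Type 0)
  | (k + 1) => Cat.of (VGph (nGph k))

/-- The objects `0, 1, …, n` of the `n`-truncated globe category. -/
structure GlobeObj (n : ℕ) where
  val : ℕ
  isLe : val ≤ n

/-- The globe quiver: two generating arrows `σ, τ : m ⟶ m+1` (encoded by `Bool`)
for each `m < n`. -/
instance (n : ℕ) : Quiver (GlobeObj n) :=
  ⟨fun m m' => { _b : Bool // m.val + 1 = m'.val }⟩

/-- A generating arrow of the globe quiver: `σ_m` for `b = false`, `τ_m` for
`b = true`. -/
def globeGen (n m : ℕ) (h : m + 1 ≤ n) (b : Bool) :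
    (⟨m, by omega⟩ : GlobeObj n) ⟶ (⟨m + 1, by omega⟩ : GlobeObj n) :=
  ⟨b, rfl⟩

/-- The free category on the globe quiver. -/
def FreeGlobe (n : ℕ) : Type := Paths (GlobeObj n)

instance (n : ℕ) : Category (FreeGlobe n) :=
  inferInstanceAs (Category (Paths (GlobeObj n)))

/-- An object of the globe quiver, regarded as an object of the free category on
it. -/
def globeOb (n m : ℕ) (h : m ≤ n) : FreeGlobe n := (⟨m, h⟩ : GlobeObj n)

/-- A generating arrow, regarded as a morphism of the free category. -/
def globeGenHom (n m : ℕ) (h : m + 1 ≤ n) (b : Bool) :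
    globeOb n m (by omega) ⟶ globeOb n (m + 1) h :=
  (globeGen n m h b).toPath

/-- The coglobularity relations `σ_{m+1} ∘ x = τ_{m+1} ∘ x` for `x ∈ {σ_m, τ_m}`
(for composable indices). -/
inductive globeRel (n : ℕ) : ∀ (X Y : FreeGlobe n), (X ⟶ Y) → (X ⟶ Y) → Prop
  | mk (m : ℕ) (h : m + 2 ≤ n) (b : Bool) :
      globeRel n (globeOb n m (by omega)) (globeOb n (m + 2) h)
        (globeGenHom n m (by omega) b ≫ globeGenHom n (m + 1) (by omega) false)
        (globeGenHom n m (by omega) b ≫ globeGenHom n (m + 1) (by omega) true)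

/-- The `n`-truncated globe category `𝔾_n`: the free category on the globe
quiver, modulo the coglobularity relations. -/
def Globe (n : ℕ) : Type :=
  CategoryTheory.Quotient (fun (X Y : FreeGlobe n) => globeRel n X Y)

instance (n : ℕ) : Category (Globe n) :=
  CategoryTheory.Quotient.category (fun (X Y : FreeGlobe n) => globeRel n X Y)

/-- The category of `n`-globular sets: presheaves on `𝔾_n`. -/
def nGSet (n : ℕ) : Type 1 := (Globe n)ᵒᵖ ⥤ Type

instance (n : ℕ) : Category (nGSet n) :=
  inferInstanceAs (Category ((Globe n)ᵒᵖ ⥤ Type))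

instance (n : ℕ) : Category (CategoryTheory.Quotient (fun (X Y : FreeGlobe n) => globeRel n X Y)) :=
  instCategoryGlobe n

/-- Concrete globular data truncated at level `n`. -/
structure GData (n : ℕ) where
  X : ∀ m : ℕ, m ≤ n → Type
  d : ∀ (m : ℕ) (h : m + 1 ≤ n), Bool → X (m+1) h → X m (Nat.le_of_succ_le h)
  rel : ∀ (m : ℕ) (h : m + 2 ≤ n) (b c : Bool) (x : X (m+2) h),
    d m (Nat.le_of_succ_le h) b (d (m+1) h false x)
      = d m (Nat.le_of_succ_le h) b (d (m+1) h c x)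

structure GDataHom {n : ℕ} (A B : GData n) where
  f : ∀ m h, A.X m h → B.X m h
  comm : ∀ m (h : m + 1 ≤ n) (b : Bool) (x : A.X (m+1) h),
    f m (Nat.le_of_succ_le h) (A.d m h b x) = B.d m h b (f (m+1) h x)

theorem GDataHom.ext' {n : ℕ} {A B : GData n} {F G : GDataHom A B}
    (h : F.f = G.f) : F = G := by
  cases F; cases G; cases h; rfl

instance {n : ℕ} : Category (GData n) where
  Hom := GDataHom
  id A := ⟨fun _ _ x => x, fun _ _ _ _ => rfl⟩
  comp F G := ⟨fun m h x => G.f m h (F.f m h x),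
    fun m h b x => by rw [F.comm, G.comm]⟩
  id_comp F := GDataHom.ext' rfl
  comp_id F := GDataHom.ext' rfl
  assoc F G H := GDataHom.ext' rfl

@[simp] theorem GData.id_f {n : ℕ} (A : GData n) (m h x) :
    (𝟙 A : GDataHom A A).f m h x = x := rfl

@[simp] theorem GData.comp_f {n : ℕ} {A B C : GData n} (F : A ⟶ B) (G : B ⟶ C) (m h x) :
    (F ≫ G : GDataHom A C).f m h x = G.f m h (F.f m h x) := rfl

/-! ### Base case: `GData 0 ≌ Type` -/

def gZeroEval : GData 0 ⥤ Type where
  obj A := A.X 0 (le_refl 0)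
  map F := TypeCat.ofHom (F.f 0 (le_refl 0))

def gZeroHomExt {A B : GData 0} {F G : A ⟶ B}
    (h : F.f 0 (le_refl 0) = G.f 0 (le_refl 0)) : F = G := by
  apply GDataHom.ext'
  funext m
  cases m with
  | zero => funext h'; exact h
  | succ k => funext h'; exact absurd h' (by omega)

instance : gZeroEval.Faithful := ⟨fun h => gZeroHomExt (congrArg (fun g x => g x) h)⟩

instance : gZeroEval.Full where
  map_surjective {A B} t := by
    refine ⟨⟨fun m => match m with
      | 0 => fun _ => ⇑t
      | (k+1) => fun h' => absurd h' (by omega), fun m h => absurd h (by omega)⟩, rfl⟩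

instance : gZeroEval.EssSurj where
  mem_essImage T := by
    refine ⟨⟨fun m _ => match m with | 0 => T | (k+1) => PEmpty,
      fun m h => absurd h (by omega), fun m h => absurd h (by omega)⟩, ⟨Iso.refl _⟩⟩

instance : gZeroEval.IsEquivalence := {}

noncomputable def gZeroEquiv : GData 0 ≌ Type := gZeroEval.asEquivalence

/-! ### Iterated sources and targets -/

variable {n : ℕ}

def GData.iter (A : GData n) (b : Bool) :
    ∀ (m : ℕ) (h : m ≤ n), A.X m h → A.X 0 (Nat.zero_le n)
  | 0, _, x => x
  | (m+1), h, x => A.iter b m (Nat.le_of_succ_le h) (A.d m h b x)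

theorem GData.iter_d (A : GData n) (b : Bool) (m : ℕ) (h : m + 2 ≤ n) (c : Bool)
    (x : A.X (m+2) h) :
    A.iter b (m+1) (Nat.le_of_succ_le h) (A.d (m+1) h c x)
      = A.iter b (m+2) h x := by
  show A.iter b m _ (A.d m _ b (A.d (m+1) h c x))
      = A.iter b m _ (A.d m _ b (A.d (m+1) h b x))
  rw [← A.rel m h b c x, ← A.rel m h b b x]

theorem GDataHom.f_iter {A B : GData n} (F : GDataHom A B) (b : Bool) :
    ∀ (m : ℕ) (h : m ≤ n) (x : A.X m h),
      F.f 0 (Nat.zero_le n) (A.iter b m h x) = B.iter b m h (F.f m h x)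
  | 0, _, _ => rfl
  | (m+1), h, x => by
      show F.f 0 _ (A.iter b m _ (A.d m h b x)) = B.iter b m _ (B.d m h b (F.f (m+1) h x))
      rw [← F.comm m h b x]
      exact F.f_iter b m _ _

/-! ### The fiber construction -/

def GData.fib (A : GData (n+1)) (a a' : A.X 0 (Nat.zero_le (n+1))) : GData n where
  X m h := {x : A.X (m+1) (Nat.succ_le_succ h) //
    A.iter false (m+1) (Nat.succ_le_succ h) x = a ∧
    A.iter true (m+1) (Nat.succ_le_succ h) x = a'}
  d m h b x := ⟨A.d (m+1) (Nat.succ_le_succ h) b x.1,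
    by rw [A.iter_d]; exact x.2.1, by rw [A.iter_d]; exact x.2.2⟩
  rel m h b c x := Subtype.ext (A.rel (m+1) (Nat.succ_le_succ h) b c x.1)

/-- The fibers functor `GData (n+1) ⥤ VGph (GData n)`. -/
def gFib : GData (n+1) ⥤ VGph (GData n) where
  obj A := ⟨A.X 0 (Nat.zero_le (n+1)), A.fib⟩
  map {A B} F :=
    { toFun := F.f 0 (Nat.zero_le (n+1))
      app := fun a a' =>
        { f := fun m h x => ⟨F.f (m+1) (Nat.succ_le_succ h) x.1,
            by rw [← F.f_iter, x.2.1], by rw [← F.f_iter, x.2.2]⟩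
          comm := fun m h b x => Subtype.ext (F.comm (m+1) (Nat.succ_le_succ h) b x.1) } }
  map_id A := VGphHom.ext' rfl (heq_of_eq (by
    funext a a'; exact GDataHom.ext' rfl))
  map_comp F G := VGphHom.ext' rfl (heq_of_eq (by
    funext a a'; exact GDataHom.ext' rfl))

instance : (gFib (n := n)).Faithful where
  map_injective {A B} {F G} h := by
    apply GDataHom.ext'
    funext m
    cases m with
    | zero =>
        funext hm x
        exact congrArg (fun Φ => VGphHom.toFun Φ x) h
    | succ k =>
        funext hm x
        exact congrArg (fun (Φ : VGphHom (gFib.obj A) (gFib.obj B)) =>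
          ((Φ.app (A.iter false (k+1) hm x) (A.iter true (k+1) hm x)).f k
            (Nat.le_of_succ_le_succ hm) ⟨x, rfl, rfl⟩).1) h

theorem appValCongr {A B : GData (n+1)} (Φ : VGphHom (gFib.obj A) (gFib.obj B))
    {a a' c c' : A.X 0 (Nat.zero_le (n+1))} (h1 : a = c) (h2 : a' = c')
    (m : ℕ) (hm : m ≤ n) (x : A.X (m+1) (Nat.succ_le_succ hm)) (hx hx' hy hy') :
    ((Φ.app a a').f m hm ⟨x, hx, hx'⟩).1 = ((Φ.app c c').f m hm ⟨x, hy, hy'⟩).1 := by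
  subst h1; subst h2; rfl

instance : (gFib (n := n)).Full where
  map_surjective {A B} Φ := by
    refine ⟨⟨fun m => match m with
      | 0 => fun _ => Φ.toFun
      | (k+1) => fun h x => ((Φ.app (A.iter false (k+1) h x) (A.iter true (k+1) h x)).f k
          (Nat.le_of_succ_le_succ h) ⟨x, rfl, rfl⟩).1, ?_⟩, ?_⟩
    · intro m h b x
      cases m with
      | zero =>
          -- goal : Φ.toFun (A.d 0 h b x) = B.d 0 h b ((Φ.app _ _).f 0 _ ⟨x, rfl, rfl⟩).1
          have mem := ((Φ.app (A.iter false 1 h x) (A.iter true 1 h x)).f 0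
            (Nat.le_of_succ_le_succ h) ⟨x, rfl, rfl⟩).2
          cases b with
          | false => exact mem.1.symm
          | true => exact mem.2.symm
      | succ k =>
          have h2 : k + 2 ≤ n + 1 := h
          have e1 := appValCongr Φ (A.iter_d false k h2 b x) (A.iter_d true k h2 b x)
            k (Nat.le_of_succ_le_succ (Nat.le_of_succ_le h2)) (A.d (k+1) h2 b x)
            rfl rfl (by rw [A.iter_d]) (by rw [A.iter_d])
          refine e1.trans ?_
          have := congrArg Subtype.val
            ((Φ.app (A.iter false (k+2) h2 x) (A.iter true (k+2) h2 x)).comm k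
              (Nat.le_of_succ_le_succ h2) b ⟨x, rfl, rfl⟩)
          exact this
    · refine VGphHom.ext' ?_ ?_
      · rfl
      apply heq_of_eq
      funext a a'
      apply GDataHom.ext'
      funext m hm z
      obtain ⟨x, hx, hx'⟩ := z
      apply Subtype.ext
      exact appValCongr Φ hx hx' m hm x rfl rfl hx hx'

/-! ### The sigma construction and essential surjectivity -/

def sigmaG (B : VGph (GData n)) : GData (n+1) where
  X m := match m with
    | 0 => fun _ => B.Obj
    | (k+1) => fun h => Σ (a : B.Obj) (a' : B.Obj), (B.hom a a').X k (Nat.le_of_succ_le_succ h)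
  d m := match m with
    | 0 => fun _ b x => cond b x.2.1 x.1
    | (k+1) => fun h b x => ⟨x.1, x.2.1, (B.hom x.1 x.2.1).d k (Nat.le_of_succ_le_succ h) b x.2.2⟩
  rel m := match m with
    | 0 => fun _ _ _ _ => rfl
    | (k+1) => fun h b c x => by
        dsimp only
        congr 2
        exact (B.hom x.1 x.2.1).rel k (Nat.le_of_succ_le_succ h) b c x.2.2

theorem sigmaG_iter (B : VGph (GData n)) (b : Bool) :
    ∀ (m : ℕ) (h : m + 1 ≤ n + 1) (x : (sigmaG B).X (m+1) h),
      (sigmaG B).iter b (m+1) h x = cond b x.2.1 x.1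
  | 0, _, _ => rfl
  | (m+1), h, x => sigmaG_iter B b m (Nat.le_of_succ_le h) _

def trEl (B : VGph (GData n)) {c c' a a' : B.Obj} (h1 : c = a) (h2 : c' = a')
    (m : ℕ) (h : m ≤ n) : (B.hom c c').X m h → (B.hom a a').X m h := by
  subst h1; subst h2; exact id

theorem trEl_d (B : VGph (GData n)) {c c' a a' : B.Obj} (h1 : c = a) (h2 : c' = a')
    (m : ℕ) (h : m + 1 ≤ n) (b : Bool) (x : (B.hom c c').X (m+1) h) :
    trEl B h1 h2 m (Nat.le_of_succ_le h) ((B.hom c c').d m h b x)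
      = (B.hom a a').d m h b (trEl B h1 h2 (m+1) h x) := by
  subst h1; subst h2; rfl

theorem trEl_sigma (B : VGph (GData n)) {c c' a a' : B.Obj} (h1 : c = a) (h2 : c' = a')
    (m : ℕ) (h : m ≤ n) (x : (B.hom c c').X m h) :
    (⟨a, a', trEl B h1 h2 m h x⟩ : Σ (u : B.Obj) (u' : B.Obj), (B.hom u u').X m h)
      = ⟨c, c', x⟩ := by
  subst h1; subst h2; rfl

def sigmaHom (B : VGph (GData n)) : gFib.obj (sigmaG B) ⟶ B where
  toFun a := a
  app a a' :=
    { f := fun m h z =>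
        trEl B (((sigmaG_iter B false m (Nat.succ_le_succ h) z.1).symm).trans z.2.1)
          (((sigmaG_iter B true m (Nat.succ_le_succ h) z.1).symm).trans z.2.2) m h z.1.2.2
      comm := fun m h b z => by
        dsimp only [GData.fib, sigmaG]
        exact trEl_d B _ _ m h b z.1.2.2 }

def sigmaInv (B : VGph (GData n)) : B ⟶ gFib.obj (sigmaG B) where
  toFun a := a
  app a a' :=
    { f := fun m h x => ⟨⟨a, a', x⟩, sigmaG_iter B false m (Nat.succ_le_succ h) ⟨a, a', x⟩, sigmaG_iter B true m (Nat.succ_le_succ h) ⟨a, a', x⟩⟩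
      comm := fun m h b x => Subtype.ext rfl }

theorem sigma_hom_inv (B : VGph (GData n)) : sigmaHom B ≫ sigmaInv B = 𝟙 _ := by
  refine VGphHom.ext' rfl (heq_of_eq ?_)
  funext a a'
  apply GDataHom.ext'
  funext m h z
  apply Subtype.ext
  exact trEl_sigma B _ _ m h z.1.2.2

theorem sigma_inv_hom (B : VGph (GData n)) : sigmaInv B ≫ sigmaHom B = 𝟙 _ := by
  refine VGphHom.ext' rfl (heq_of_eq ?_)
  funext a a'
  apply GDataHom.ext'
  funext m h x
  rfl

instance : (gFib (n := n)).EssSurj where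
  mem_essImage B := ⟨sigmaG B, ⟨⟨sigmaHom B, sigmaInv B, sigma_hom_inv B, sigma_inv_hom B⟩⟩⟩

instance : (gFib (n := n)).IsEquivalence := {}

noncomputable def gFibEquiv (n : ℕ) : GData (n+1) ≌ VGph (GData n) := gFib.asEquivalence

/-! ### Functoriality of `VGph` -/

section VMap

variable {W : Type u} [Category.{v} W] (F : V ⥤ W)

def vmap : VGph V ⥤ VGph W where
  obj A := ⟨A.Obj, fun a a' => F.obj (A.hom a a')⟩
  map Φ := ⟨Φ.toFun, fun a a' => F.map (Φ.app a a')⟩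
  map_id A := VGphHom.ext' rfl (heq_of_eq (by funext a a'; exact F.map_id _))
  map_comp Φ Ψ := VGphHom.ext' rfl (heq_of_eq (by funext a a'; exact F.map_comp _ _))

instance [F.Faithful] : (vmap F).Faithful where
  map_injective {A B} {Φ Ψ} h := by
    obtain ⟨t1, a1⟩ := Φ
    obtain ⟨t2, a2⟩ := Ψ
    replace h : (⟨t1, fun a a' => F.map (a1 a a')⟩ : VGphHom ((vmap F).obj A) ((vmap F).obj B))
        = ⟨t2, fun a a' => F.map (a2 a a')⟩ := h
    replace h := (VGphHom.mk.injEq _ _ _ _).mp h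
    rw [VGphHom.mk.injEq]
    obtain ⟨h1, h2⟩ := h
    subst h1
    refine ⟨rfl, heq_of_eq ?_⟩
    funext a a'
    exact F.map_injective (congrFun (congrFun (eq_of_heq h2) a) a')

instance [F.Full] : (vmap F).Full where
  map_surjective {A B} Ψ :=
    ⟨⟨Ψ.toFun, fun a a' => F.preimage (Ψ.app a a')⟩,
      VGphHom.ext' rfl (heq_of_eq (by funext a a'; exact F.map_preimage _))⟩

instance [F.EssSurj] : (vmap F).EssSurj where
  mem_essImage B :=
    ⟨⟨B.Obj, fun a a' => F.objPreimage (B.hom a a')⟩,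
      ⟨{ hom := ⟨fun a => a, fun a a' => (F.objObjPreimageIso (B.hom a a')).hom⟩
         inv := ⟨fun a => a, fun a a' => (F.objObjPreimageIso (B.hom a a')).inv⟩
         hom_inv_id := VGphHom.ext' rfl (heq_of_eq (by
           funext a a'
           show (F.objObjPreimageIso (B.hom a a')).hom ≫ (F.objObjPreimageIso (B.hom a a')).inv = 𝟙 _
           simp))
         inv_hom_id := VGphHom.ext' rfl (heq_of_eq (by
           funext a a'
           show (F.objObjPreimageIso (B.hom a a')).inv ≫ (F.objObjPreimageIso (B.hom a a')).hom = 𝟙 _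
           simp)) }⟩⟩

noncomputable def vmapEquiv {W : Type u} [Category.{v} W] (e : V ≌ W) :
    VGph V ≌ VGph W := by
  have : (vmap e.functor).Faithful := inferInstance
  have : (vmap e.functor).Full := inferInstance
  have : (vmap e.functor).EssSurj := inferInstance
  have : (vmap e.functor).IsEquivalence := {}
  exact (vmap e.functor).asEquivalence

end VMap

/-! ### The main induction (concrete side) -/

noncomputable def mainEquiv : ∀ n : ℕ, GData n ≌ ↥(nGph n)
  | 0 => gZeroEquiv
  | (k+1) => (gFibEquiv k).trans (vmapEquiv (mainEquiv k))


/-! ### The evaluation functor from presheaves to concrete globular data -/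

def gOb (n m : ℕ) (h : m ≤ n) : Globe n := ⟨globeOb n m h⟩

def gGen (n m : ℕ) (h : m + 1 ≤ n) (b : Bool) :
    gOb n m (Nat.le_of_succ_le h) ⟶ gOb n (m+1) h :=
  (Quotient.functor _).map (globeGenHom n m h b)

theorem gGen_rel (n m : ℕ) (h : m + 2 ≤ n) (b c : Bool) :
    gGen n m (Nat.le_of_succ_le h) b ≫ gGen n (m+1) h false
      = gGen n m (Nat.le_of_succ_le h) b ≫ gGen n (m+1) h c := by
  cases c with
  | true =>
      show (Quotient.functor _).map (globeGenHom n m (Nat.le_of_succ_le h) b)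
            ≫ (Quotient.functor _).map (globeGenHom n (m+1) h false)
          = (Quotient.functor _).map (globeGenHom n m (Nat.le_of_succ_le h) b)
            ≫ (Quotient.functor _).map (globeGenHom n (m+1) h true)
      rw [← Functor.map_comp, ← Functor.map_comp]
      exact CategoryTheory.Quotient.sound _ (globeRel.mk m h b)
  | false => rfl

/-- Evaluation of a presheaf on the globe category as concrete globular data. -/
def gEval (n : ℕ) : nGSet n ⥤ GData n where
  obj P :=
    { X := fun m h => P.obj (Opposite.op (gOb n m h))
      d := fun m h b => ⇑(P.map (gGen n m h b).op)
      rel := fun m h b c x => by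
        dsimp only
        have e1 : ∀ (c : Bool) (x : P.obj (Opposite.op (gOb n (m+2) h))),
            P.map (gGen n m (Nat.le_of_succ_le h) b).op (P.map (gGen n (m+1) h c).op x)
              = P.map (gGen n m (Nat.le_of_succ_le h) b ≫ gGen n (m+1) h c).op x := by
          intro c x
          rw [op_comp, P.map_comp]
          rfl
        rw [e1, e1, gGen_rel n m h b c] }
  map {P Q} η :=
    { f := fun m h => ⇑(η.app (Opposite.op (gOb n m h)))
      comm := fun m h b x => by
        dsimp only
        exact ConcreteCategory.congr_hom (η.naturality (gGen n m h b).op) x }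
  map_id P := GDataHom.ext' rfl
  map_comp η θ := GDataHom.ext' rfl

section EvalFF

variable {n : ℕ} {P Q : nGSet n}

theorem squareGen (g : GDataHom ((gEval n).obj P) ((gEval n).obj Q))
    (x y : GlobeObj n) (e : x ⟶ y) (z : P.obj (Opposite.op (⟨y⟩ : Globe n))) :
    g.f x.val x.isLe (P.map ((Quotient.functor (fun X Y => globeRel n X Y)).map e.toPath).op z)
      = Q.map ((Quotient.functor (fun X Y => globeRel n X Y)).map e.toPath).op
          (g.f y.val y.isLe z) := by
  obtain ⟨xv, hx⟩ := x
  obtain ⟨yv, hy⟩ := y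
  obtain ⟨b, hb⟩ := e
  dsimp only at hb
  subst hb
  exact g.comm xv hy b z

theorem squarePath (g : GDataHom ((gEval n).obj P) ((gEval n).obj Q))
    (x y : GlobeObj n) (p : Quiver.Path x y) :
    ∀ z : P.obj (Opposite.op (⟨y⟩ : Globe n)),
    g.f x.val x.isLe
        (P.map ((Quotient.functor (fun X Y => globeRel n X Y)).map
          (X := x) (Y := y) p).op z)
      = Q.map ((Quotient.functor (fun X Y => globeRel n X Y)).map
          (X := x) (Y := y) p).op (g.f y.val y.isLe z) := by
  induction p with
  | nil =>
      intro z
      rw [show (Quotient.functor (fun X Y => globeRel n X Y)).map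
          (X := x) (Y := x) Quiver.Path.nil = 𝟙 (⟨x⟩ : Globe n) from
        (Quotient.functor (fun X Y => globeRel n X Y)).map_id (X := x)]
      have hP := ConcreteCategory.congr_hom (P.map_id (Opposite.op (⟨x⟩ : Globe n))) (z : P.obj _)
      have hQ := ConcreteCategory.congr_hom (Q.map_id (Opposite.op (⟨x⟩ : Globe n))) (g.f x.val x.isLe z)
      exact (congrArg (g.f x.val x.isLe) hP).trans hQ.symm
  | @cons b c p e ih =>
      intro z
      rw [show (Quotient.functor (fun X Y => globeRel n X Y)).map
            (X := x) (Y := c) (p.cons e)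
          = (Quotient.functor (fun X Y => globeRel n X Y)).map (X := x) (Y := b) p
            ≫ (Quotient.functor (fun X Y => globeRel n X Y)).map (X := b) (Y := c) e.toPath from
        (Quotient.functor (fun X Y => globeRel n X Y)).map_comp
          (X := x) (Y := b) (Z := c) p e.toPath]
      erw [op_comp, Functor.map_comp, Functor.map_comp]
      exact (ih _).trans (congrArg _ (squareGen g _ _ e z))

instance : (gEval n).Faithful where
  map_injective {P Q} {η θ} h := by
    apply NatTrans.ext
    funext X
    exact TypeCat.homEquiv.injective (congrArg (fun g => GDataHom.f g X.unop.as.val X.unop.as.isLe) h)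

instance : (gEval n).Full where
  map_surjective {P Q} g := by
    refine ⟨{ app := fun X => TypeCat.ofHom (g.f X.unop.as.val X.unop.as.isLe)
              naturality := fun {X Y} f => ?_ }, ?_⟩
    · ext z
      obtain ⟨f'⟩ := f
      induction f' using Quot.inductionOn with
      | h p => exact squarePath g Y.unop.as X.unop.as p z
    · exact GDataHom.ext' rfl

end EvalFF

/-! ### Essential surjectivity of evaluation -/

def GData.dgen {n : ℕ} (A : GData n) {m m' : ℕ} (h : m ≤ n) (h' : m' ≤ n) (b : Bool)
    (e : m + 1 = m') : A.X m' h' → A.X m h :=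
  match m', e, h' with
  | _, rfl, h' => A.d m h' b

def toPre {n : ℕ} (A : GData n) : (GlobeObj n) ⥤q (Type 0)ᵒᵖ where
  obj x := Opposite.op (A.X x.val x.isLe)
  map {x y} e := Quiver.Hom.op (V := Type 0)
    (X := A.X y.val y.isLe) (Y := A.X x.val x.isLe)
    (TypeCat.ofHom (A.dgen x.isLe y.isLe e.1 e.2))

def freeF {n : ℕ} (A : GData n) : FreeGlobe n ⥤ (Type 0)ᵒᵖ := Paths.lift (toPre A)

theorem freeF_compat {n : ℕ} (A : GData n) :
    ∀ (x y : FreeGlobe n) (f₁ f₂ : x ⟶ y), globeRel n x y f₁ f₂ →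
      (freeF A).map f₁ = (freeF A).map f₂ := by
  intro x y f1 f2 r
  induction r with
  | mk m h b =>
      show (freeF A).map (globeGenHom n m _ b ≫ globeGenHom n (m+1) h false)
        = (freeF A).map (globeGenHom n m _ b ≫ globeGenHom n (m+1) h true)
      rw [Functor.map_comp, Functor.map_comp]
      show ((freeF A).map (globeGen n m _ b).toPath) ≫ ((freeF A).map (globeGen n (m+1) h false).toPath)
        = ((freeF A).map (globeGen n m _ b).toPath) ≫ ((freeF A).map (globeGen n (m+1) h true).toPath)
      simp only [freeF]
      rw [Paths.lift_toPath, Paths.lift_toPath, Paths.lift_toPath]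
      apply Quiver.Hom.unop_inj
      ext z
      exact A.rel m h b true z

def globeF {n : ℕ} (A : GData n) : Globe n ⥤ (Type 0)ᵒᵖ :=
  CategoryTheory.Quotient.lift _ (freeF A) (freeF_compat A)

def presheafOf {n : ℕ} (A : GData n) : nGSet n := (globeF A).leftOp

def evalPresheafIso {n : ℕ} (A : GData n) : (gEval n).obj (presheafOf A) ≅ A where
  hom := ⟨fun m h x => x, fun m h b x => rfl⟩
  inv := ⟨fun m h x => x, fun m h b x => rfl⟩
  hom_inv_id := GDataHom.ext' rfl
  inv_hom_id := GDataHom.ext' rfl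

instance {n : ℕ} : (gEval n).EssSurj where
  mem_essImage A := ⟨presheafOf A, ⟨evalPresheafIso A⟩⟩

instance {n : ℕ} : (gEval n).IsEquivalence := {}

noncomputable def gEvalEquiv (n : ℕ) : nGSet n ≌ GData n := (gEval n).asEquivalence

/-- Final assembly. -/
noncomputable def finalEquiv (n : ℕ) : nGSet n ≌ ↥(nGph n) :=
  (gEvalEquiv n).trans (mainEquiv n)

/-- For every `n ≥ 0`, the category of `n`-globular sets is equivalent to the
iterated graph category `n-Gph`. -/
theorem stmt_14 (n : ℕ) : Nonempty (nGSet n ≌ ↥(nGph n)) :=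
  ⟨finalEquiv n⟩
end
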